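/- Let M̂ be a finite-horizon MDP without reward with transition model P̂, let r, r̂ be two reward functions such that |r_h(s,a) − r̂_h(s,a)| ≤ C_h(s,a) for all s, a, h, and define E_H(s,a) = 0 and E_h(s,a) = min((H−h)R_max, C_h(s,a) + Σ_{s'} P̂(s'|s,a) max_{a'} E_{h+1}(s',a')). Then for every policy π and all s, a, h: |Q^π_{M̂∪r̂,h}(s,a) − Q^π_{M̂∪r,h}(s,a)| ≤ E_h(s,a), provided both rewards are bounded in [0, R_max]. -/

import Mathlib

/-!
Both Q-functions take values in `[0, (H - h) Rmax]`, which gives the first branch of the minimum.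
For the second, subtracting the two Bellman equations leaves the reward gap, bounded by `C`, plus
the `P̂`- and `π`-average of the next-step gap, which by backward induction on `h` is at most
`max_{a'} E_{h+1}(s', a')` at every next state `s'`.
-/

open Finset Set

theorem Nat.forall_of_terminal_of_step (H : ℕ) {p : ℕ → Prop} (terminal : ∀ h, H ≤ h → p h)
    (step : ∀ h, h < H → p (h + 1) → p h) (h : ℕ) : p h := by
  rcases le_or_gt H h with hH | hH
  · exact terminal h hH
  · exact Nat.decreasingInduction (motive := fun k _ => p k) (fun k hk => step k hk)
      (terminal H le_rfl) hH.le

theorem sum_mul_mem_Icc {ι : Type*} [Fintype ι] {w f : ι → ℝ} {lo hi : ℝ}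
    (hw0 : ∀ i, 0 ≤ w i) (hw1 : ∑ i, w i = 1) (hf : ∀ i, f i ∈ Icc lo hi) :
    ∑ i, w i * f i ∈ Icc lo hi :=
  (convex_Icc lo hi).sum_mem (fun i _ => hw0 i) hw1 (fun i _ => hf i)

theorem abs_sum_mul_le_sum_mul {ι : Type*} [Fintype ι] {w f g : ι → ℝ}
    (hw0 : ∀ i, 0 ≤ w i) (hfg : ∀ i, |f i| ≤ g i) : |∑ i, w i * f i| ≤ ∑ i, w i * g i :=
  calc |∑ i, w i * f i| ≤ ∑ i, |w i * f i| := abs_sum_le_sum_abs _ _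
    _ ≤ ∑ i, w i * g i := sum_le_sum fun i _ => by
      rw [abs_mul, abs_of_nonneg (hw0 i)]
      exact mul_le_mul_of_nonneg_left (hfg i) (hw0 i)

section QFunction

variable {S A : Type*} [Fintype S] [Fintype A]

structure IsQFunction (H : ℕ) (P : S → A → S → ℝ) (π r Q : ℕ → S → A → ℝ) : Prop where
  terminal : ∀ h, H ≤ h → ∀ s a, Q h s a = 0
  bellman : ∀ h, h < H → ∀ s a,
    Q h s a = r h s a + ∑ s', P s a s' * ∑ a', π (h + 1) s' a' * Q (h + 1) s' a'

variable {H : ℕ} {P : S → A → S → ℝ} {π r Q : ℕ → S → A → ℝ}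

theorem IsQFunction.mem_Icc (hQ : IsQFunction H P π r Q) {Rmax : ℝ}
    (hP0 : ∀ s a s', 0 ≤ P s a s') (hP1 : ∀ s a, ∑ s', P s a s' = 1)
    (hπ0 : ∀ h s a, 0 ≤ π h s a) (hπ1 : ∀ h s, ∑ a, π h s a = 1)
    (hr : ∀ h s a, 0 ≤ r h s a ∧ r h s a ≤ Rmax) :
    ∀ h s a, Q h s a ∈ Icc 0 (((H - h : ℕ) : ℝ) * Rmax) := by
  refine Nat.forall_of_terminal_of_step H (fun h hH s a => ?_) (fun h hH ih s a => ?_)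
  · simp [hQ.terminal h hH, Nat.sub_eq_zero_of_le hH]
  · have hnext := sum_mul_mem_Icc (hP0 s a) (hP1 s a) fun s' =>
      sum_mul_mem_Icc (hπ0 (h + 1) s') (hπ1 (h + 1) s') (ih s')
    have hsteps : ((H - h : ℕ) : ℝ) = ((H - (h + 1) : ℕ) : ℝ) + 1 := by
      rw [← Nat.cast_add_one, Nat.sub_add_eq, Nat.sub_add_cancel (Nat.sub_pos_of_lt hH)]
    rw [hQ.bellman h hH, hsteps]
    constructor <;> nlinarith [hr h s a, hnext.1, hnext.2]

theorem IsQFunction.sub_eq {r' Q' : ℕ → S → A → ℝ} (hQ : IsQFunction H P π r Q)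
    (hQ' : IsQFunction H P π r' Q') {h : ℕ} (hH : h < H) (s : S) (a : A) :
    Q' h s a - Q h s a = r' h s a - r h s a +
      ∑ s', P s a s' * ∑ a', π (h + 1) s' a' * (Q' (h + 1) s' a' - Q (h + 1) s' a') := by
  rw [hQ.bellman h hH, hQ'.bellman h hH]
  simp only [mul_sub, sum_sub_distrib]
  ring

end QFunction

theorem stmt10_general {S A : Type*} [Fintype S] [Fintype A] [Nonempty A]
    (H : ℕ) (Rmax : ℝ)
    (Ph : S → A → S → ℝ)
    (hPhnn : ∀ s a s', 0 ≤ Ph s a s') (hPhsum : ∀ s a, ∑ s' : S, Ph s a s' = 1)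
    (r rh : ℕ → S → A → ℝ)
    (hr : ∀ h s a, 0 ≤ r h s a ∧ r h s a ≤ Rmax)
    (hrh : ∀ h s a, 0 ≤ rh h s a ∧ rh h s a ≤ Rmax)
    (C : ℕ → S → A → ℝ)
    (hrC : ∀ h s a, |r h s a - rh h s a| ≤ C h s a)
    (E : ℕ → S → A → ℝ)
    (hE0 : ∀ h, H ≤ h → ∀ s a, E h s a = 0)
    (hE : ∀ h, h < H → ∀ s a, E h s a =
      min (((H - h : ℕ) : ℝ) * Rmax)
        (C h s a + ∑ s' : S, Ph s a s' *
          Finset.univ.sup' Finset.univ_nonempty (fun a' => E (h+1) s' a')))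
    (π : ℕ → S → A → ℝ)
    (hπnn : ∀ h s a, 0 ≤ π h s a) (hπsum : ∀ h s, ∑ a : A, π h s a = 1)
    (Qr Qrh : ℕ → S → A → ℝ)
    -- `Qr = Q^π_{M̂∪r}`, `Qrh = Q^π_{M̂∪r̂}` (both under the estimated transitions `P̂`)
    (hQr0 : ∀ h, H ≤ h → ∀ s a, Qr h s a = 0)
    (hQr : ∀ h, h < H → ∀ s a, Qr h s a =
      r h s a + ∑ s' : S, Ph s a s' * ∑ a' : A, π (h+1) s' a' * Qr (h+1) s' a')
    (hQrh0 : ∀ h, H ≤ h → ∀ s a, Qrh h s a = 0)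
    (hQrh : ∀ h, h < H → ∀ s a, Qrh h s a =
      rh h s a + ∑ s' : S, Ph s a s' * ∑ a' : A, π (h+1) s' a' * Qrh (h+1) s' a') :
    ∀ h s a, |Qrh h s a - Qr h s a| ≤ E h s a := by
  have hQ : IsQFunction H Ph π r Qr := ⟨hQr0, hQr⟩
  have hQ' : IsQFunction H Ph π rh Qrh := ⟨hQrh0, hQrh⟩
  have hQI := hQ.mem_Icc hPhnn hPhsum hπnn hπsum hr
  have hQI' := hQ'.mem_Icc hPhnn hPhsum hπnn hπsum hrh
  refine Nat.forall_of_terminal_of_step H (fun h hH s a => ?_) (fun h hH ih s a => ?_)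
  · simp [hQr0 h hH, hQrh0 h hH, hE0 h hH]
  set Emax := fun s' => univ.sup' univ_nonempty fun a' => E (h + 1) s' a'
  have hnext : ∀ s', |∑ a', π (h + 1) s' a' * (Qrh (h + 1) s' a' - Qr (h + 1) s' a')| ≤ Emax s' :=
    fun s' => calc
      _ ≤ ∑ a', π (h + 1) s' a' * Emax s' := abs_sum_mul_le_sum_mul (hπnn (h + 1) s') fun a' =>
          (ih s' a').trans (le_sup' (fun a' => E (h + 1) s' a') (mem_univ a'))
      _ = Emax s' := by rw [← sum_mul, hπsum, one_mul]
  rw [hE h hH]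
  refine le_min (abs_sub_le_of_nonneg_of_le (hQI' h s a).1 (hQI' h s a).2
    (hQI h s a).1 (hQI h s a).2) ?_
  calc |Qrh h s a - Qr h s a|
      ≤ |rh h s a - r h s a| + |∑ s', Ph s a s' * ∑ a', π (h + 1) s' a' *
          (Qrh (h + 1) s' a' - Qr (h + 1) s' a')| := by rw [hQ.sub_eq hQ' hH]; exact abs_add_le _ _
    _ ≤ C h s a + ∑ s', Ph s a s' * Emax s' := by
      gcongr
      · rw [abs_sub_comm]; exact hrC h s a
      · exact abs_sum_mul_le_sum_mul (hPhnn s a) hnext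

/-- cf. Lemma B.11 of the paper. If `|r_h(s,a) − r̂_h(s,a)| ≤ C_h(s,a)`
and `E` is defined by `E_H = 0`,
`E_h(s,a) = min((H−h)Rmax, C_h(s,a) + ∑_{s'} P̂(s'|s,a) max_{a'} E_{h+1}(s',a'))`,
then for every policy `π`: `|Q^π_{M̂∪r̂,h}(s,a) − Q^π_{M̂∪r,h}(s,a)| ≤ E_h(s,a)`. -/
theorem stmt10 {S A : Type*} [Fintype S] [Fintype A] [Nonempty A]
    [DecidableEq S] [DecidableEq A]
    (H : ℕ) (Rmax : ℝ) (hR : 0 ≤ Rmax)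
    (Ph : S → A → S → ℝ)
    (hPhnn : ∀ s a s', 0 ≤ Ph s a s') (hPhsum : ∀ s a, ∑ s' : S, Ph s a s' = 1)
    (r rh : ℕ → S → A → ℝ)
    (hr : ∀ h s a, 0 ≤ r h s a ∧ r h s a ≤ Rmax)
    (hrh : ∀ h s a, 0 ≤ rh h s a ∧ rh h s a ≤ Rmax)
    (C : ℕ → S → A → ℝ)
    (hrC : ∀ h s a, |r h s a - rh h s a| ≤ C h s a)
    (E : ℕ → S → A → ℝ)
    (hE0 : ∀ h, H ≤ h → ∀ s a, E h s a = 0)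
    (hE : ∀ h, h < H → ∀ s a, E h s a =
      min (((H - h : ℕ) : ℝ) * Rmax)
        (C h s a + ∑ s' : S, Ph s a s' *
          Finset.univ.sup' Finset.univ_nonempty (fun a' => E (h+1) s' a')))
    (π : ℕ → S → A → ℝ)
    (hπnn : ∀ h s a, 0 ≤ π h s a) (hπsum : ∀ h s, ∑ a : A, π h s a = 1)
    (Qr Qrh : ℕ → S → A → ℝ)
    -- `Qr = Q^π_{M̂∪r}`, `Qrh = Q^π_{M̂∪r̂}` (both under the estimated transitions `P̂`)
    (hQr0 : ∀ h, H ≤ h → ∀ s a, Qr h s a = 0)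
    (hQr : ∀ h, h < H → ∀ s a, Qr h s a =
      r h s a + ∑ s' : S, Ph s a s' * ∑ a' : A, π (h+1) s' a' * Qr (h+1) s' a')
    (hQrh0 : ∀ h, H ≤ h → ∀ s a, Qrh h s a = 0)
    (hQrh : ∀ h, h < H → ∀ s a, Qrh h s a =
      rh h s a + ∑ s' : S, Ph s a s' * ∑ a' : A, π (h+1) s' a' * Qrh (h+1) s' a') :
    ∀ h s a, |Qrh h s a - Qr h s a| ≤ E h s a :=
  stmt10_general H Rmax Ph hPhnn hPhsum r rh hr hrh C hrC E hE0 hE π hπnn hπsum Qr Qrh hQr0 hQr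
    hQrh0 hQrh
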